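/- Let a : U X ⇸ X be a reflexive and transitive numerical relation and define δ : Set X → X → ℝ≥0∞ by δ A x = ⨅_{𝔵 ∈ U X, A ∈ 𝔵} a 𝔵 x. Then δ is an approach distance on X and its ultrafilter convergence equals a: for all 𝔵 ∈ U X and x ∈ X, ⨆_{A ∈ 𝔵} δ A x = a 𝔵 x. -/

import Mathlib

open scoped ENNReal
open CategoryTheory

noncomputable section

/-- The extension `Ū r` of a numerical relation `r : X ⇸ Y` to ultrafilters:
`Ū r (𝔵, 𝔶) = ⨆_{A ∈ 𝔵} ⨆_{B ∈ 𝔶} ⨅_{x ∈ A} ⨅_{y ∈ B} r x y`. -/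
def uExt {X Y : Type*} (r : X → Y → ℝ≥0∞) (𝔵 : Ultrafilter X) (𝔶 : Ultrafilter Y) : ℝ≥0∞ :=
  ⨆ A ∈ 𝔵, ⨆ B ∈ 𝔶, ⨅ x ∈ A, ⨅ y ∈ B, r x y

/-- The multiplication `m_X : U (U X) → U X` of the ultrafilter monad:
`m_X 𝔛 = {A ⊆ X | {𝔞 ∈ U X | A ∈ 𝔞} ∈ 𝔛}`. -/
def mU {X : Type*} (𝔛 : Ultrafilter (Ultrafilter X)) : Ultrafilter X :=
  𝔛.bind id

/-- `ξ : U [0,∞] → [0,∞]`, `ξ 𝔳 = ⨆_{A ∈ 𝔳} ⨅_{u ∈ A} u`. -/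
def xi (𝔳 : Ultrafilter ℝ≥0∞) : ℝ≥0∞ :=
  ⨆ A ∈ 𝔳, ⨅ u ∈ A, u

/-- `δ : P X × X → [0,∞]` is an approach distance. -/
structure IsApproachDistance {X : Type*} (δ : Set X → X → ℝ≥0∞) : Prop where
  dist_singleton : ∀ x : X, δ {x} x = 0
  dist_empty : ∀ x : X, δ (∅ : Set X) x = ∞
  dist_union : ∀ (A B : Set X) (x : X), δ (A ∪ B) x = min (δ A x) (δ B x)
  dist_closure : ∀ (A : Set X) (x : X) (ε : ℝ≥0∞), δ A x ≤ δ {y | δ A y ≤ ε} x + ε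

/-- The ultrafilter convergence associated to a distance function `δ`:
`a 𝔵 x = ⨆_{A ∈ 𝔵} δ A x`. -/
def appConv {X : Type*} (δ : Set X → X → ℝ≥0∞) (𝔵 : Ultrafilter X) (x : X) : ℝ≥0∞ :=
  ⨆ A ∈ 𝔵, δ A x

/-- `f : X → Y` is a contraction with respect to convergences `a` and `b`:
`a 𝔵 x ≥ b (U f 𝔵) (f x)`. -/
def IsContraction {X Y : Type*} (a : Ultrafilter X → X → ℝ≥0∞)
    (b : Ultrafilter Y → Y → ℝ≥0∞) (f : X → Y) : Prop :=
  ∀ (𝔵 : Ultrafilter X) (x : X), b (Ultrafilter.map f 𝔵) (f x) ≤ a 𝔵 x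

/-!
Both nontrivial inequalities come from transitivity applied to a well-chosen `𝔛 ∈ U (U X)`.
For `a 𝔵 x ≤ ⨆_{A ∈ 𝔵} δ A x < c`, every `A ∈ 𝔵` lies in some `𝔷` with `a 𝔷 x < c`, so `𝔵` lifts
through `m_X` to an `𝔛` concentrated on `{𝔷 | a 𝔷 x ≤ c}`; transitivity against `pure x` and
reflexivity then give `a 𝔵 x ≤ Ū a (𝔛, pure x) ≤ c`. For the closure axiom, take `𝔶 ∋ A^(ε)` with
`a 𝔶 x` close to `δ A^(ε) x`, choose for each `y ∈ A^(ε)` an ultrafilter `g y ∋ A` with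
`a (g y) y` close to `ε`, and apply transitivity to `𝔛 = U g 𝔶`, for which `A ∈ m_X 𝔛`.
-/

lemma mem_mU {X : Type*} {𝔛 : Ultrafilter (Ultrafilter X)} {A : Set X} :
    A ∈ mU 𝔛 ↔ {𝔷 : Ultrafilter X | A ∈ 𝔷} ∈ 𝔛 :=
  Filter.mem_bind'

section UExt

variable {X Y : Type*} {r : X → Y → ℝ≥0∞} {c : ℝ≥0∞}

lemma uExt_le_of_forall_exists {𝔵 : Ultrafilter X} {𝔶 : Ultrafilter Y}
    (h : ∀ A ∈ 𝔵, ∀ B ∈ 𝔶, ∃ x ∈ A, ∃ y ∈ B, r x y ≤ c) : uExt r 𝔵 𝔶 ≤ c :=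
  iSup₂_le fun A hA => iSup₂_le fun B hB =>
    let ⟨x, hx, y, hy, hxy⟩ := h A hA B hB
    (iInf₂_le x hx).trans ((iInf₂_le y hy).trans hxy)

lemma uExt_pure_le {𝔵 : Ultrafilter X} {y : Y} (h : ∀ᶠ x in 𝔵, r x y ≤ c) :
    uExt r 𝔵 (pure y) ≤ c :=
  uExt_le_of_forall_exists fun _ hA _ hB =>
    let ⟨x, hxA, hx⟩ := Ultrafilter.nonempty_of_mem (Filter.inter_mem hA h)
    ⟨x, hxA, y, hB, hx⟩

lemma uExt_map_le {g : Y → X} {𝔶 : Ultrafilter Y} (h : ∀ᶠ y in 𝔶, r (g y) y ≤ c) :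
    uExt r (Ultrafilter.map g 𝔶) 𝔶 ≤ c :=
  uExt_le_of_forall_exists fun _ hA _ hB =>
    let ⟨y, ⟨hyA, hyB⟩, hy⟩ := Ultrafilter.nonempty_of_mem
      (Filter.inter_mem (Filter.inter_mem (Ultrafilter.mem_map.1 hA) hB) h)
    ⟨g y, hyA, y, hyB, hy⟩

end UExt

lemma exists_mU_eq_of_forall_exists {X : Type*} {𝔵 : Ultrafilter X} {T : Set (Ultrafilter X)}
    (hT : ∀ A ∈ 𝔵, ∃ 𝔷 ∈ T, A ∈ 𝔷) : ∃ 𝔘 : Ultrafilter (Ultrafilter X), T ∈ 𝔘 ∧ mU 𝔘 = 𝔵 := by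
  set s : Set X → Set (Ultrafilter X) := fun A => T ∩ {𝔷 | A ∈ 𝔷}
  have hs : Monotone s := fun A B hAB =>
    Set.inter_subset_inter_right T fun _ h => Filter.mem_of_superset h hAB
  have : ((𝔵 : Filter X).lift' s).NeBot :=
    (Filter.lift'_neBot_iff hs).2 fun A hA => let ⟨𝔷, h𝔷⟩ := hT A hA; ⟨𝔷, h𝔷.1, h𝔷.2⟩
  have hmem : ∀ A ∈ 𝔵, s A ∈ Ultrafilter.of ((𝔵 : Filter X).lift' s) := fun A hA =>
    Ultrafilter.of_le _ (Filter.mem_lift' hA)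
  refine ⟨Ultrafilter.of _, Filter.mem_of_superset (hmem _ Filter.univ_mem)
    Set.inter_subset_left, Ultrafilter.coe_le_coe.1 fun A hA => ?_⟩
  exact mem_mU.2 (Filter.mem_of_superset (hmem A hA) Set.inter_subset_right)

section

variable {X : Type*}

def IsReflexiveConv (a : Ultrafilter X → X → ℝ≥0∞) : Prop :=
  ∀ x : X, a (pure x) x = 0

def IsTransitiveConv (a : Ultrafilter X → X → ℝ≥0∞) : Prop :=
  ∀ (𝔛 : Ultrafilter (Ultrafilter X)) (𝔵 : Ultrafilter X) (x : X),
    a (mU 𝔛) x ≤ uExt a 𝔛 𝔵 + a 𝔵 x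

def ultraDist (a : Ultrafilter X → X → ℝ≥0∞) (A : Set X) (x : X) : ℝ≥0∞ :=
  ⨅ (𝔵 : Ultrafilter X) (_ : A ∈ 𝔵), a 𝔵 x

variable {a : Ultrafilter X → X → ℝ≥0∞} {A : Set X} {x : X}

lemma ultraDist_le_of_mem {𝔵 : Ultrafilter X} (h : A ∈ 𝔵) : ultraDist a A x ≤ a 𝔵 x :=
  iInf₂_le 𝔵 h

lemma exists_mem_lt_of_ultraDist_lt {c : ℝ≥0∞} (h : ultraDist a A x < c) :
    ∃ 𝔵 : Ultrafilter X, A ∈ 𝔵 ∧ a 𝔵 x < c := by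
  simpa only [ultraDist, iInf_lt_iff, exists_prop] using h

lemma ultraDist_anti {B : Set X} (hAB : A ⊆ B) : ultraDist a B x ≤ ultraDist a A x :=
  le_iInf₂ fun _ h => ultraDist_le_of_mem (Filter.mem_of_superset h hAB)

lemma ultraDist_singleton (hrefl : IsReflexiveConv a) : ultraDist a {x} x = 0 :=
  nonpos_iff_eq_zero.1 ((ultraDist_le_of_mem (Set.mem_singleton x)).trans_eq (hrefl x))

lemma ultraDist_empty : ultraDist a ∅ x = ∞ :=
  iInf₂_eq_top.2 fun 𝔵 h => absurd h 𝔵.empty_notMem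

lemma ultraDist_union {B : Set X} :
    ultraDist a (A ∪ B) x = min (ultraDist a A x) (ultraDist a B x) := by
  refine le_antisymm
    (le_min (ultraDist_anti Set.subset_union_left) (ultraDist_anti Set.subset_union_right))
    (le_iInf₂ fun 𝔵 h => ?_)
  rcases Ultrafilter.union_mem_iff.1 h with hA | hB
  · exact min_le_of_left_le (ultraDist_le_of_mem hA)
  · exact min_le_of_right_le (ultraDist_le_of_mem hB)

lemma ultraDist_le_add_of_forall_mem (htrans : IsTransitiveConv a) {c : ℝ≥0∞}
    {𝔶 : Ultrafilter X} (g : X → Ultrafilter X) (hg : ∀ y, A ∈ g y) (h : ∀ᶠ y in 𝔶, a (g y) y ≤ c) :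
    ultraDist a A x ≤ c + a 𝔶 x :=
  calc ultraDist a A x ≤ a (mU (Ultrafilter.map g 𝔶)) x :=
        ultraDist_le_of_mem (mem_mU.2 (Ultrafilter.mem_map.2 (Filter.univ_mem' hg)))
    _ ≤ uExt a (Ultrafilter.map g 𝔶) 𝔶 + a 𝔶 x := htrans _ _ _
    _ ≤ c + a 𝔶 x := add_le_add_left (uExt_map_le h) _

lemma ultraDist_le_add_of_mem (htrans : IsTransitiveConv a) {ε ε' : ℝ≥0∞} (hε : ε < ε')
    {𝔶 : Ultrafilter X} (h𝔶 : {y | ultraDist a A y ≤ ε} ∈ 𝔶) :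
    ultraDist a A x ≤ ε' + a 𝔶 x := by
  obtain ⟨y₀, hy₀⟩ := Ultrafilter.nonempty_of_mem h𝔶
  obtain ⟨𝔷₀, hA₀, -⟩ := exists_mem_lt_of_ultraDist_lt (hy₀.trans_lt hε)
  have hchoice : ∀ y, ∃ 𝔷 : Ultrafilter X, A ∈ 𝔷 ∧ (ultraDist a A y ≤ ε → a 𝔷 y ≤ ε') := by
    intro y
    by_cases hy : ultraDist a A y ≤ ε
    · obtain ⟨𝔷, hA, h𝔷⟩ := exists_mem_lt_of_ultraDist_lt (hy.trans_lt hε)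
      exact ⟨𝔷, hA, fun _ => h𝔷.le⟩
    · exact ⟨𝔷₀, hA₀, fun h => absurd h hy⟩
  choose g hgA hg using hchoice
  exact ultraDist_le_add_of_forall_mem htrans g hgA (Filter.mem_of_superset h𝔶 hg)

lemma ultraDist_le_closure_add (htrans : IsTransitiveConv a) (ε : ℝ≥0∞) :
    ultraDist a A x ≤ ultraDist a {y | ultraDist a A y ≤ ε} x + ε := by
  have h : ∀ ε' > ε, ultraDist a A x ≤ ε' + ultraDist a {y | ultraDist a A y ≤ ε} x := by
    intro ε' hε'
    simp only [ultraDist, ENNReal.add_iInf]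
    exact le_iInf₂ fun 𝔶 h𝔶 => ultraDist_le_add_of_mem htrans hε' h𝔶
  rw [← tsub_le_iff_left]
  exact le_of_forall_gt_imp_ge_of_dense fun ε' hε' =>
    tsub_le_iff_left.2 ((h ε' hε').trans_eq (add_comm _ _))

lemma isApproachDistance_ultraDist (hrefl : IsReflexiveConv a) (htrans : IsTransitiveConv a) :
    IsApproachDistance (ultraDist a) where
  dist_singleton _ := ultraDist_singleton hrefl
  dist_empty _ := ultraDist_empty
  dist_union _ _ _ := ultraDist_union
  dist_closure _ _ := ultraDist_le_closure_add htrans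

lemma le_of_forall_mem_ultraDist_lt (hrefl : IsReflexiveConv a) (htrans : IsTransitiveConv a)
    {𝔵 : Ultrafilter X} {c : ℝ≥0∞} (h : ∀ A ∈ 𝔵, ultraDist a A x < c) : a 𝔵 x ≤ c := by
  obtain ⟨𝔘, hT, rfl⟩ := exists_mU_eq_of_forall_exists (T := {𝔷 | a 𝔷 x ≤ c}) fun A hA =>
    let ⟨𝔷, hA𝔷, h𝔷⟩ := exists_mem_lt_of_ultraDist_lt (h A hA)
    ⟨𝔷, h𝔷.le, hA𝔷⟩
  calc a (mU 𝔘) x ≤ uExt a 𝔘 (pure x) + a (pure x) x := htrans _ _ _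
    _ = uExt a 𝔘 (pure x) := by rw [hrefl, add_zero]
    _ ≤ c := uExt_pure_le hT

lemma appConv_ultraDist (hrefl : IsReflexiveConv a) (htrans : IsTransitiveConv a) :
    appConv (ultraDist a) = a := by
  funext 𝔵 x
  refine le_antisymm (iSup₂_le fun _ hA => ultraDist_le_of_mem hA)
    (le_of_forall_gt_imp_ge_of_dense fun c hc =>
      le_of_forall_mem_ultraDist_lt hrefl htrans fun A hA => ?_)
  exact (le_iSup₂ (f := fun A (_ : A ∈ 𝔵) => ultraDist a A x) A hA).trans_lt hc

end

/-- If `a : U X ⇸ X` is a reflexive and transitive numerical relation, then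
`δ A x = ⨅_{𝔵 ∈ U X, A ∈ 𝔵} a 𝔵 x` is an approach distance on `X` whose ultrafilter
convergence is `a`. -/
theorem reflexive_transitive_gives_approach (X : Type*) (a : Ultrafilter X → X → ℝ≥0∞)
    (hrefl : ∀ x : X, a (pure x : Ultrafilter X) x = 0)
    (htrans : ∀ (𝔛 : Ultrafilter (Ultrafilter X)) (𝔵 : Ultrafilter X) (x : X),
      a (mU 𝔛) x ≤ uExt a 𝔛 𝔵 + a 𝔵 x)
    (δ : Set X → X → ℝ≥0∞)
    (hδ : ∀ (A : Set X) (x : X), δ A x = ⨅ (𝔵 : Ultrafilter X) (_ : A ∈ 𝔵), a 𝔵 x) :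
    IsApproachDistance δ ∧ ∀ (𝔵 : Ultrafilter X) (x : X), (⨆ A ∈ 𝔵, δ A x) = a 𝔵 x := by
  obtain rfl : δ = ultraDist a := funext fun A => funext (hδ A)
  exact ⟨isApproachDistance_ultraDist hrefl htrans,
    fun 𝔵 x => congrFun₂ (appConv_ultraDist hrefl htrans) 𝔵 x⟩

end
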